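/- Let μ' be feasible for the primal LP of the LAP P'. Define μ by μ_v(ℓ) = (μ'_v(ℓ) + μ'_ℓ(v))/2 for v ∈ V and ℓ ∈ L_v∖{#}, and μ_v(#) = μ'_v(v) for v ∈ V. Then μ is feasible for the primal LP formulation of the ILAP P. -/

import Mathlib

open Finset

/-! Incomplete LAP (ILAP): labels are `Option K`, the dummy label `#` is `none`.
The reduced complete LAP instance `P'` lives on `V ⊕ K` (both partitions equal
`V ∪ (L ∖ {#})`). -/

section IlapDefs

variable {V K : Type*} [Fintype V] [Fintype K] [DecidableEq V] [DecidableEq K]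

/-- Feasibility for the ILAP: allowed labels, and each non-dummy label used at most once. -/
def IlapFeasible (Lab : V → Finset (Option K)) (x : V → Option K) : Prop :=
  (∀ v, x v ∈ Lab v) ∧ ∀ u v k, x u = some k → x v = some k → u = v

/-- Cost of an ILAP assignment. -/
def ilapCost (θ : V → Option K → ℝ) (x : V → Option K) : ℝ := ∑ v, θ v (x v)

/-- Allowed labels of the reduced LAP instance `P'` on `V ⊕ K`:
`L'_v = (L_v ∖ {#}) ∪ {v}` and `L'_ℓ = V_ℓ ∪ {ℓ}`. -/
def redLab (Lab : V → Finset (Option K)) : V ⊕ K → Finset (V ⊕ K)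
  | Sum.inl v => insert (Sum.inl v) ((univ.filter fun k => some k ∈ Lab v).image Sum.inr)
  | Sum.inr k => insert (Sum.inr k) ((univ.filter fun v => some k ∈ Lab v).image Sum.inl)

/-- Costs of the reduced LAP instance `P'`: halved original costs between `V` and `L ∖ {#}`,
`θ_v(#)` on the vertex diagonal and `0` on the label diagonal. -/
noncomputable def redCost (θ : V → Option K → ℝ) : V ⊕ K → V ⊕ K → ℝ
  | Sum.inl v, Sum.inr k => θ v (some k) / 2
  | Sum.inr k, Sum.inl v => θ v (some k) / 2
  | Sum.inl v, Sum.inl _ => θ v none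
  | Sum.inr _, Sum.inr _ => 0

/-- Feasibility for the primal LP formulation of the ILAP. -/
def IlapPrimalFeasible (Lab : V → Finset (Option K)) (μ : V → Option K → ℝ) : Prop :=
  (∀ v ℓ, ℓ ∈ Lab v → 0 ≤ μ v ℓ) ∧
  (∀ v ℓ, ℓ ∉ Lab v → μ v ℓ = 0) ∧
  (∀ v, ∑ ℓ ∈ Lab v, μ v ℓ = 1) ∧
  (∀ k : K, ∑ v ∈ univ.filter (fun v => some k ∈ Lab v), μ v (some k) ≤ 1)

/-- Objective of the primal LP formulation of the ILAP. -/
def ilapPrimalObj (θ : V → Option K → ℝ) (Lab : V → Finset (Option K))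
    (μ : V → Option K → ℝ) : ℝ :=
  ∑ v, ∑ ℓ ∈ Lab v, θ v ℓ * μ v ℓ

/-- The set of optimal solutions of the primal LP formulation of the ILAP. -/
def IlapPrimalOpt (θ : V → Option K → ℝ) (Lab : V → Finset (Option K)) :
    Set (V → Option K → ℝ) :=
  {μ | IlapPrimalFeasible Lab μ ∧
    ∀ ν, IlapPrimalFeasible Lab ν → ilapPrimalObj θ Lab μ ≤ ilapPrimalObj θ Lab ν}

/-- Feasibility for the dual LP formulation of the ILAP: `β ≤ 0` and
`α_v + [ℓ ≠ #]·β_ℓ ≤ θ_v(ℓ)` on allowed pairs. -/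
def IlapDualFeasible (θ : V → Option K → ℝ) (Lab : V → Finset (Option K))
    (p : (V → ℝ) × (K → ℝ)) : Prop :=
  (∀ k, p.2 k ≤ 0) ∧
  ∀ v ℓ, ℓ ∈ Lab v →
    p.1 v + (match ℓ with | some k => p.2 k | none => 0) ≤ θ v ℓ

/-- Objective of the dual LP formulation of the ILAP. -/
def ilapDualObj (p : (V → ℝ) × (K → ℝ)) : ℝ := ∑ v, p.1 v + ∑ k, p.2 k

/-- The set of optimal solutions of the dual LP formulation of the ILAP. -/
def IlapDualOpt (θ : V → Option K → ℝ) (Lab : V → Finset (Option K)) :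
    Set ((V → ℝ) × (K → ℝ)) :=
  {p | IlapDualFeasible θ Lab p ∧
    ∀ q, IlapDualFeasible θ Lab q → ilapDualObj q ≤ ilapDualObj p}

end IlapDefs

section LAPDefs

variable {V L : Type*} [Fintype V] [Fintype L] [DecidableEq V] [DecidableEq L]

/-- Feasibility for the primal LP of a (complete) LAP. -/
def PrimalFeasible (Lab : V → Finset L) (μ : V → L → ℝ) : Prop :=
  (∀ v ℓ, ℓ ∈ Lab v → 0 ≤ μ v ℓ) ∧
  (∀ v ℓ, ℓ ∉ Lab v → μ v ℓ = 0) ∧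
  (∀ v, ∑ ℓ ∈ Lab v, μ v ℓ = 1) ∧
  (∀ ℓ : L, ∑ v ∈ univ.filter (fun v => ℓ ∈ Lab v), μ v ℓ = 1)

/-- Objective of the primal LP of a (complete) LAP. -/
def primalObj (θ : V → L → ℝ) (Lab : V → Finset L) (μ : V → L → ℝ) : ℝ :=
  ∑ v, ∑ ℓ ∈ Lab v, θ v ℓ * μ v ℓ

/-- The set of optimal solutions of the primal LP of a (complete) LAP. -/
def PrimalOpt (θ : V → L → ℝ) (Lab : V → Finset L) : Set (V → L → ℝ) :=
  {μ | PrimalFeasible Lab μ ∧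
    ∀ ν, PrimalFeasible Lab ν → primalObj θ Lab μ ≤ primalObj θ Lab ν}

/-- Feasibility for the dual LP of a (complete) LAP. -/
def DualFeasible (θ : V → L → ℝ) (Lab : V → Finset L) (p : (V → ℝ) × (L → ℝ)) : Prop :=
  ∀ v ℓ, ℓ ∈ Lab v → p.1 v + p.2 ℓ ≤ θ v ℓ

/-- Objective of the dual LP of a (complete) LAP. -/
def dualObj (p : (V → ℝ) × (L → ℝ)) : ℝ := ∑ v, p.1 v + ∑ ℓ, p.2 ℓ

/-- The set of optimal solutions of the dual LP of a (complete) LAP. -/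
def DualOpt (θ : V → L → ℝ) (Lab : V → Finset L) : Set ((V → ℝ) × (L → ℝ)) :=
  {p | DualFeasible θ Lab p ∧ ∀ q, DualFeasible θ Lab q → dualObj q ≤ dualObj p}

end LAPDefs

/-! The reduced instance `P'` is symmetric (`w' ∈ L'_w ↔ w ∈ L'_{w'}`), so for each vertex `v`
feasibility of `μ'` gives both a row and a column equation,
`μ'_v(v) + Σ_k μ'_v(k) = 1 = μ'_v(v) + Σ_k μ'_k(v)`;
their average is the row equation of `μ`.
For a label `k` the same averaging yields `Σ_v μ_v(k) = 1 - μ'_k(k) ≤ 1`. -/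

theorem Finset.sum_eq_none_add_sum_some {α M : Type*} [Fintype α] [DecidableEq α]
    [AddCommMonoid M] {s : Finset (Option α)} (hs : none ∈ s) (f : Option α → M) :
    ∑ o ∈ s, f o = f none + ∑ a ∈ univ.filter (fun a => some a ∈ s), f (some a) := by
  have hfilter : univ.filter (fun a => some a ∈ s) = eraseNone s := by ext; simp
  rw [hfilter, ← sum_insertNone, insertNone_eraseNone, insert_eq_of_mem hs]

theorem PrimalFeasible.sum_col_of_symm {V : Type*} [Fintype V] [DecidableEq V]
    {Lab : V → Finset V} {μ : V → V → ℝ} (h : PrimalFeasible Lab μ)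
    (hsymm : ∀ v w, w ∈ Lab v ↔ v ∈ Lab w) (w : V) : ∑ v ∈ Lab w, μ v w = 1 := by
  rw [← h.2.2.2 w]
  congr 1
  ext v
  simp [hsymm v w]

section Reduction

variable {V K : Type*} [Fintype V] [Fintype K] [DecidableEq V] [DecidableEq K]
  {Lab : V → Finset (Option K)}

@[simp]
theorem inr_mem_redLab_inl {v : V} {k : K} :
    Sum.inr k ∈ redLab Lab (Sum.inl v) ↔ some k ∈ Lab v := by
  simp [redLab]

@[simp]
theorem inl_mem_redLab_inr {v : V} {k : K} :
    Sum.inl v ∈ redLab Lab (Sum.inr k) ↔ some k ∈ Lab v := by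
  simp [redLab]

theorem self_mem_redLab (w : V ⊕ K) : w ∈ redLab Lab w := by
  cases w <;> simp [redLab]

theorem mem_redLab_comm (w w' : V ⊕ K) : w' ∈ redLab Lab w ↔ w ∈ redLab Lab w' := by
  rcases w with v | k <;> rcases w' with v' | k' <;> simp [redLab, eq_comm]

theorem sum_redLab_inl (f : V ⊕ K → ℝ) (v : V) :
    ∑ w ∈ redLab Lab (Sum.inl v), f w
      = f (Sum.inl v) + ∑ k ∈ univ.filter (fun k => some k ∈ Lab v), f (Sum.inr k) := by
  rw [redLab, sum_insert (by simp), sum_image (by simp)]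

theorem sum_redLab_inr (f : V ⊕ K → ℝ) (k : K) :
    ∑ w ∈ redLab Lab (Sum.inr k), f w
      = f (Sum.inr k) + ∑ v ∈ univ.filter (fun v => some k ∈ Lab v), f (Sum.inl v) := by
  rw [redLab, sum_insert (by simp), sum_image (by simp)]

noncomputable def ilapPrimalOfRed (μ' : V ⊕ K → V ⊕ K → ℝ) : V → Option K → ℝ :=
  fun v ℓ => match ℓ with
    | some k => (μ' (Sum.inl v) (Sum.inr k) + μ' (Sum.inr k) (Sum.inl v)) / 2
    | none => μ' (Sum.inl v) (Sum.inl v)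

variable {μ' : V ⊕ K → V ⊕ K → ℝ} (hμ' : PrimalFeasible (redLab Lab) μ')
include hμ'

theorem PrimalFeasible.redLab_inl_row (v : V) :
    μ' (Sum.inl v) (Sum.inl v)
      + ∑ k ∈ univ.filter (fun k => some k ∈ Lab v), μ' (Sum.inl v) (Sum.inr k) = 1 := by
  rw [← sum_redLab_inl]
  exact hμ'.2.2.1 _

theorem PrimalFeasible.redLab_inl_col (v : V) :
    μ' (Sum.inl v) (Sum.inl v)
      + ∑ k ∈ univ.filter (fun k => some k ∈ Lab v), μ' (Sum.inr k) (Sum.inl v) = 1 := by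
  rw [← sum_redLab_inl (fun w => μ' w (Sum.inl v))]
  exact hμ'.sum_col_of_symm mem_redLab_comm _

theorem PrimalFeasible.redLab_inr_row (k : K) :
    μ' (Sum.inr k) (Sum.inr k)
      + ∑ v ∈ univ.filter (fun v => some k ∈ Lab v), μ' (Sum.inr k) (Sum.inl v) = 1 := by
  rw [← sum_redLab_inr]
  exact hμ'.2.2.1 _

theorem PrimalFeasible.redLab_inr_col (k : K) :
    μ' (Sum.inr k) (Sum.inr k)
      + ∑ v ∈ univ.filter (fun v => some k ∈ Lab v), μ' (Sum.inl v) (Sum.inr k) = 1 := by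
  rw [← sum_redLab_inr (fun w => μ' w (Sum.inr k))]
  exact hμ'.sum_col_of_symm mem_redLab_comm _

theorem PrimalFeasible.ilapPrimalOfRed_nonneg {v : V} {ℓ : Option K} (hℓ : ℓ ∈ Lab v) :
    0 ≤ ilapPrimalOfRed μ' v ℓ := by
  cases ℓ with
  | none => exact hμ'.1 _ _ (self_mem_redLab _)
  | some k =>
    have h₁ := hμ'.1 (Sum.inl v) (Sum.inr k) (inr_mem_redLab_inl.2 hℓ)
    have h₂ := hμ'.1 (Sum.inr k) (Sum.inl v) (inl_mem_redLab_inr.2 hℓ)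
    simp only [ilapPrimalOfRed]
    positivity

theorem PrimalFeasible.ilapPrimalOfRed_eq_zero (hdum : ∀ v, (none : Option K) ∈ Lab v)
    {v : V} {ℓ : Option K} (hℓ : ℓ ∉ Lab v) : ilapPrimalOfRed μ' v ℓ = 0 := by
  cases ℓ with
  | none => exact absurd (hdum v) hℓ
  | some k =>
    simp [ilapPrimalOfRed, hμ'.2.1 (Sum.inl v) (Sum.inr k) (by simpa using hℓ),
      hμ'.2.1 (Sum.inr k) (Sum.inl v) (by simpa using hℓ)]

theorem PrimalFeasible.sum_ilapPrimalOfRed (hdum : ∀ v, (none : Option K) ∈ Lab v) (v : V) :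
    ∑ ℓ ∈ Lab v, ilapPrimalOfRed μ' v ℓ = 1 := by
  rw [sum_eq_none_add_sum_some (hdum v)]
  simp only [ilapPrimalOfRed, ← sum_div, sum_add_distrib]
  linarith [hμ'.redLab_inl_row v, hμ'.redLab_inl_col v]

theorem PrimalFeasible.sum_ilapPrimalOfRed_some_le (k : K) :
    ∑ v ∈ univ.filter (fun v => some k ∈ Lab v), ilapPrimalOfRed μ' v (some k) ≤ 1 := by
  simp only [ilapPrimalOfRed, ← sum_div, sum_add_distrib]
  linarith [hμ'.redLab_inr_row k, hμ'.redLab_inr_col k, hμ'.1 _ _ (self_mem_redLab (Sum.inr k))]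

theorem PrimalFeasible.ilapPrimalFeasible_ilapPrimalOfRed
    (hdum : ∀ v, (none : Option K) ∈ Lab v) : IlapPrimalFeasible Lab (ilapPrimalOfRed μ') :=
  ⟨fun _ _ => hμ'.ilapPrimalOfRed_nonneg, fun _ _ => hμ'.ilapPrimalOfRed_eq_zero hdum,
    hμ'.sum_ilapPrimalOfRed hdum, hμ'.sum_ilapPrimalOfRed_some_le⟩

end Reduction

theorem statement13_general {V K : Type*} [Fintype V] [Fintype K] [DecidableEq V] [DecidableEq K]
    (Lab : V → Finset (Option K)) (hdum : ∀ v, (none : Option K) ∈ Lab v)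
    (μ' : (V ⊕ K) → (V ⊕ K) → ℝ) (hμ' : PrimalFeasible (redLab Lab) μ')
    (μ : V → Option K → ℝ)
    (hμ : μ = fun v ℓ => match ℓ with
      | some k => (μ' (Sum.inl v) (Sum.inr k) + μ' (Sum.inr k) (Sum.inl v)) / 2
      | none => μ' (Sum.inl v) (Sum.inl v)) :
    IlapPrimalFeasible Lab μ := by
  subst hμ
  exact hμ'.ilapPrimalFeasible_ilapPrimalOfRed hdum

/-- Theorem 5(a): the map (20) sends a primal-feasible solution of the reduced LAP `P'`
to a feasible solution of the primal LP formulation of the ILAP `P`. -/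
theorem statement13 {V K : Type*} [Fintype V] [Fintype K] [DecidableEq V] [DecidableEq K]
    (Lab : V → Finset (Option K)) (hdum : ∀ v, (none : Option K) ∈ Lab v)
    (θ : V → Option K → ℝ)
    (μ' : (V ⊕ K) → (V ⊕ K) → ℝ) (hμ' : PrimalFeasible (redLab Lab) μ')
    (μ : V → Option K → ℝ)
    (hμ : μ = fun v ℓ => match ℓ with
      | some k => (μ' (Sum.inl v) (Sum.inr k) + μ' (Sum.inr k) (Sum.inl v)) / 2
      | none => μ' (Sum.inl v) (Sum.inl v)) :
    IlapPrimalFeasible Lab μ :=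
  statement13_general Lab hdum μ' hμ' μ hμ
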